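/- arXiv:1506.06818 — 3 statements merged into one kernel-verified Lean document; each statement's English description precedes it below -/
import Mathlib

section
/- For any finite graph G=(V,E), spin configuration σ ∈ {-1,+1}^V with associated 2-state Potts configuration σ̂ (via identification 1↔1, -1↔2), coupling constants J, magnetic field h, inverse temperature β, and p_{ij} = 1 - exp(-2βJ_{ij}), one has exp(-2β(H^Potts(σ̂) + Σ_{{i,j}∈E} J_{ij})) = Σ_{ω ∈ {0,1}^E} (Π_{{i,j}: ω_{ij}=1} p_{ij} δ_{σ_i,σ_j}) (Π_{{i,j}: ω_{ij}=0} (1-p_{ij})) · exp(β Σ_{i∈V} h_i (δ_{σ_i,1} - δ_{σ_i,-1})). -/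
open Finset

noncomputable section

variable {V : Type}

/-- The spin value (±1) attached to a Boolean spin (`true ↔ +1`, `false ↔ -1`). -/
def spin (b : Bool) : ℝ := if b then 1 else -1

/-- The subgraph of `G` whose open edges are the edges in `F`. -/
def openSub (G : SimpleGraph V) (F : Finset (Sym2 V)) : SimpleGraph V where
  Adj i j := G.Adj i j ∧ s(i, j) ∈ F
  symm := by
    constructor
    intro i j h
    exact ⟨h.1.symm, by rw [Sym2.eq_swap]; exact h.2⟩
  loopless := ⟨fun i h => G.irrefl h.1⟩

instance [Fintype V] (H : SimpleGraph V) : Fintype H.ConnectedComponent := by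
  classical exact Fintype.ofSurjective H.connectedComponentMk Quot.exists_rep

/-- The vertex set of a connected component, as a `Finset`. -/
def compSupp [Fintype V] (H : SimpleGraph V) (c : H.ConnectedComponent) : Finset V := by
  classical exact Finset.univ.filter fun v => H.connectedComponentMk v = c

/-- Kronecker delta `δ_{σ_i,σ_j}` of a configuration on an (unordered) edge. -/
def eDelta {S : Type} [DecidableEq S] (σ : V → S) : Sym2 V → ℝ :=
  Sym2.lift ⟨fun i j => if σ i = σ j then 1 else 0, fun _ _ => by simp [eq_comm]⟩

/-- Product of spins `σ_i σ_j` on an (unordered) edge. -/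
def eProd (σ : V → Bool) : Sym2 V → ℝ :=
  Sym2.lift ⟨fun i j => spin (σ i) * spin (σ j), fun _ _ => mul_comm _ _⟩

/-- The consistency indicator `Δ(σ,ω)`: equal to `1` iff `σ` is constant on
every open edge of the configuration `F`. -/
def Delta (G : SimpleGraph V) (F : Finset (Sym2 V)) (σ : V → Bool) : ℝ := by
  classical exact if ∀ i j, G.Adj i j → s(i, j) ∈ F → σ i = σ j then 1 else 0

/-- The Bernoulli factor `B_J(ω) = ∏_{e open} p_e ∏_{e closed} (1-p_e)`. -/
def bern [Fintype V] [DecidableEq V] (G : SimpleGraph V) [DecidableRel G.Adj]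
    (p : Sym2 V → ℝ) (F : Finset (Sym2 V)) : ℝ :=
  (∏ e ∈ F, p e) * ∏ e ∈ G.edgeFinset \ F, (1 - p e)

/-! Since `δ_{σ_i,σ_j} ∈ {0, 1}`, the Boltzmann weight `exp (2βJ_e (δ_e - 1))` of a single edge
equals `p_e δ_e + (1 - p_e)`. The interaction part of the Boltzmann factor is the product of these
edge weights, and expanding that product over the edges (`Finset.prod_add`) produces the sum over
bond configurations `ω`, encoded as the subsets `F` of open edges. -/

theorem exp_mul_eDelta_sub {S : Type} [DecidableEq S] (σ : V → S) (a : ℝ) (e : Sym2 V) :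
    Real.exp (a * eDelta σ e - a) = (1 - Real.exp (-a)) * eDelta σ e + Real.exp (-a) := by
  induction e using Sym2.ind with
  | _ i j => by_cases hij : σ i = σ j <;> simp [eDelta, hij, sub_eq_add_neg]

theorem neg_two_mul_pottsEnergy_add_sum_coupling [Fintype V] (E : Finset (Sym2 V))
    (β : ℝ) (J : Sym2 V → ℝ) (h : V → ℝ) (σ : V → Bool) :
    -(2 * β) * ((-(∑ e ∈ E, J e * eDelta σ e) - ∑ i, h i / 2 * spin (σ i)) + ∑ e ∈ E, J e)
      = ∑ e ∈ E, (2 * β * J e * eDelta σ e - 2 * β * J e) + β * ∑ i, h i * spin (σ i) := by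
  have half_field : ∑ i, h i / 2 * spin (σ i) = (∑ i, h i * spin (σ i)) / 2 := by
    rw [sum_div]
    exact sum_congr rfl fun i _ => by ring
  simp only [half_field, sum_sub_distrib, mul_assoc, ← mul_sum]
  ring

theorem statement0_general [Fintype V] [DecidableEq V]
    (G : SimpleGraph V) [DecidableRel G.Adj]
    (β : ℝ)
    (J : Sym2 V → ℝ)
    (h : V → ℝ) (σ : V → Bool)
    (p : Sym2 V → ℝ) (hp : ∀ e, p e = 1 - Real.exp (-(2 * β) * J e)) :
    Real.exp (-(2 * β) *
        ((-(∑ e ∈ G.edgeFinset, J e * eDelta σ e)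
            - ∑ i, h i / 2 * spin (σ i)) + ∑ e ∈ G.edgeFinset, J e))
      = ∑ F ∈ G.edgeFinset.powerset,
          (∏ e ∈ F, p e * eDelta σ e) * (∏ e ∈ G.edgeFinset \ F, (1 - p e)) *
            Real.exp (β * ∑ i, h i * spin (σ i)) := by
  have edge_factor (e : Sym2 V) :
      Real.exp (2 * β * J e * eDelta σ e - 2 * β * J e) = p e * eDelta σ e + (1 - p e) := by
    rw [exp_mul_eDelta_sub, hp, neg_mul, sub_sub_cancel]
  rw [neg_two_mul_pottsEnergy_add_sum_coupling, Real.exp_add, Real.exp_sum,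
    prod_congr rfl fun e _ => edge_factor e, prod_add, sum_mul]

/-- Lemma 5 (lema-fev1): expansion of the 2-state Potts Boltzmann factor with
free boundary conditions into Bernoulli/Kronecker factors. -/
theorem statement0 [Fintype V] [DecidableEq V]
    (G : SimpleGraph V) [DecidableRel G.Adj]
    (β : ℝ) (hβ : 0 < β)
    (J : Sym2 V → ℝ) (hJ : ∀ e ∈ G.edgeFinset, 0 ≤ J e)
    (h : V → ℝ) (σ : V → Bool)
    (p : Sym2 V → ℝ) (hp : ∀ e, p e = 1 - Real.exp (-(2 * β) * J e)) :
    Real.exp (-(2 * β) *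
        ((-(∑ e ∈ G.edgeFinset, J e * eDelta σ e)
            - ∑ i, h i / 2 * spin (σ i)) + ∑ e ∈ G.edgeFinset, J e))
      = ∑ F ∈ G.edgeFinset.powerset,
          (∏ e ∈ F, p e * eDelta σ e) * (∏ e ∈ G.edgeFinset \ F, (1 - p e)) *
            Real.exp (β * ∑ i, h i * spin (σ i)) :=
  statement0_general G β J h σ p hp

end
end

section
/- The edge-marginal of the Edwards-Sokal measure is the random-cluster measure with external field: for every ω ∈ {0,1}^E, Σ_{σ ∈ {-1,+1}^V} ν_{p,h,G}(σ,ω) = φ_{p,h,G}(ω), where φ_{p,h,G}(ω) ∝ B_J(ω) Π_{α=1}^{k(ω,G)} 2cosh(β Σ_{i∈K_α} h_i). -/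
open Finset

noncomputable section

variable {V : Type}

/-- The Edwards–Sokal weight `B_J(ω) Δ(σ,ω) exp(β Σ_i h_i (δ_{σ_i,1} - δ_{σ_i,-1}))`. -/
def esW [Fintype V] [DecidableEq V] (G : SimpleGraph V) [DecidableRel G.Adj]
    (β : ℝ) (p : Sym2 V → ℝ) (h : V → ℝ) (σ : V → Bool) (F : Finset (Sym2 V)) : ℝ :=
  bern G p F * Delta G F σ * Real.exp (β * ∑ i, h i * spin (σ i))

/-- The random-cluster weight `B_J(ω) ∏_α 2cosh(β Σ_{i∈K_α} h_i)`. -/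
def rcW [Fintype V] [DecidableEq V] (G : SimpleGraph V) [DecidableRel G.Adj]
    (β : ℝ) (p : Sym2 V → ℝ) (h : V → ℝ) (F : Finset (Sym2 V)) : ℝ :=
  bern G p F * ∏ c : (openSub G F).ConnectedComponent,
    2 * Real.cosh (β * ∑ i ∈ compSupp (openSub G F) c, h i)



/-! Summing out the spins. The consistency indicator `Δ(σ, ω)` keeps exactly the spin
configurations that are constant on every open cluster, i.e. those of the form `f ∘ K` with `K`
the map sending a vertex to its cluster and `f` a sign per cluster. For such `σ` the field term
`exp (β ∑ᵢ hᵢ σᵢ)` factorises over the clusters, and summing the sign of a cluster `K` gives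
`e^{β h(K)} + e^{-β h(K)} = 2 cosh (β h(K))`. Hence `∑_σ ES(σ, ω) = RC(ω)` for every `ω`, and the
normalised measures agree. -/

namespace SimpleGraph

variable {H : SimpleGraph V} {α : Type*}

lemma Walk.apply_eq_of_forall_adj {σ : V → α} (hσ : ∀ i j, H.Adj i j → σ i = σ j) {i j : V}
    (w : H.Walk i j) : σ i = σ j := by
  induction w with
  | nil => rfl
  | cons hadj _ ih => exact (hσ _ _ hadj).trans ih

lemma image_comp_connectedComponentMk [Fintype V] [DecidableEq V] [DecidableRel H.Adj]
    [DecidableEq H.ConnectedComponent] [Fintype α] [DecidableEq α] :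
    univ.image (fun f : H.ConnectedComponent → α => f ∘ H.connectedComponentMk) =
      ({σ : V → α | ∀ i j, H.Adj i j → σ i = σ j} : Finset (V → α)) := by
  ext σ
  simp only [mem_image, mem_univ, true_and, mem_filter]
  constructor
  · rintro ⟨f, rfl⟩ i j hadj
    exact congrArg f (ConnectedComponent.sound hadj.reachable)
  · intro hσ
    exact ⟨ConnectedComponent.lift σ fun _ _ w _ => w.apply_eq_of_forall_adj hσ, rfl⟩

lemma sum_filter_forall_adj_eq [Fintype V] [DecidableEq V] [DecidableRel H.Adj]
    [DecidableEq H.ConnectedComponent] [Fintype α] [DecidableEq α]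
    {M : Type*} [AddCommMonoid M] (g : (V → α) → M) :
    ∑ σ : V → α with ∀ i j, H.Adj i j → σ i = σ j, g σ =
      ∑ f : H.ConnectedComponent → α, g (f ∘ H.connectedComponentMk) := by
  have hinj : Function.Injective fun f : H.ConnectedComponent → α => f ∘ H.connectedComponentMk :=
    Quot.mk_surjective.injective_comp_right
  rw [← image_comp_connectedComponentMk, sum_image fun f _ f' _ hff' => hinj hff']

end SimpleGraph

lemma mem_compSupp [Fintype V] {H : SimpleGraph V} {c : H.ConnectedComponent} {v : V} :
    v ∈ compSupp H c ↔ H.connectedComponentMk v = c := by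
  simp [compSupp]

lemma sum_mul_comp_connectedComponentMk [Fintype V] {R : Type*} [NonUnitalNonAssocSemiring R]
    (H : SimpleGraph V) (u : V → R) (w : H.ConnectedComponent → R) :
    ∑ i, u i * w (H.connectedComponentMk i) = ∑ c, (∑ i ∈ compSupp H c, u i) * w c := by
  classical
  rw [← sum_fiberwise_of_maps_to (g := H.connectedComponentMk) fun _ _ => mem_univ _]
  refine sum_congr rfl fun c _ => ?_
  rw [sum_mul]
  refine sum_congr (by ext; simp [mem_compSupp]) fun i hi => ?_
  rw [(mem_filter.1 hi).2]

lemma sum_exp_mul_spin (x : ℝ) : ∑ b : Bool, Real.exp (x * spin b) = 2 * Real.cosh x := by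
  simp [spin, Real.cosh_eq]
  ring

lemma sum_Delta_mul [Fintype V] [DecidableEq V] (G : SimpleGraph V) (F : Finset (Sym2 V))
    [DecidableEq (openSub G F).ConnectedComponent] (g : (V → Bool) → ℝ) :
    ∑ σ, Delta G F σ * g σ =
      ∑ f : (openSub G F).ConnectedComponent → Bool, g (f ∘ (openSub G F).connectedComponentMk) := by
  classical
  rw [← SimpleGraph.sum_filter_forall_adj_eq, sum_filter]
  refine sum_congr rfl fun σ _ => ?_
  simp only [Delta, openSub, and_imp]
  split_ifs <;> simp

lemma sum_Delta_mul_exp [Fintype V] [DecidableEq V] (G : SimpleGraph V) (β : ℝ) (h : V → ℝ)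
    (F : Finset (Sym2 V)) :
    ∑ σ, Delta G F σ * Real.exp (β * ∑ i, h i * spin (σ i)) =
      ∏ c : (openSub G F).ConnectedComponent,
        2 * Real.cosh (β * ∑ i ∈ compSupp (openSub G F) c, h i) := by
  classical
  set H := openSub G F
  calc ∑ σ, Delta G F σ * Real.exp (β * ∑ i, h i * spin (σ i))
      = ∑ f : H.ConnectedComponent → Bool,
          ∏ c, Real.exp (β * (∑ i ∈ compSupp H c, h i) * spin (f c)) := by
        rw [sum_Delta_mul]
        refine sum_congr rfl fun f _ => ?_
        rw [← Real.exp_sum, Function.comp_def,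
          sum_mul_comp_connectedComponentMk H h fun c => spin (f c), mul_sum]
        simp only [mul_assoc]
    _ = ∏ c : H.ConnectedComponent, ∑ b, Real.exp (β * (∑ i ∈ compSupp H c, h i) * spin b) :=
        (Fintype.prod_sum fun c b => Real.exp (β * (∑ i ∈ compSupp H c, h i) * spin b)).symm
    _ = _ := prod_congr rfl fun c _ => sum_exp_mul_spin _

lemma sum_esW [Fintype V] [DecidableEq V] (G : SimpleGraph V) [DecidableRel G.Adj]
    (β : ℝ) (p : Sym2 V → ℝ) (h : V → ℝ) (F : Finset (Sym2 V)) :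
    ∑ σ, esW G β p h σ F = rcW G β p h F := by
  simp only [esW, rcW, mul_assoc, ← mul_sum, sum_Delta_mul_exp]

theorem statement5_general [Fintype V] [DecidableEq V]
    (G : SimpleGraph V) [DecidableRel G.Adj]
    (β : ℝ)
    (h : V → ℝ)
    (p : Sym2 V → ℝ)
    (F : Finset (Sym2 V)) :
    (∑ σ : V → Bool, esW G β p h σ F) /
        (∑ σ : V → Bool, ∑ F' ∈ G.edgeFinset.powerset, esW G β p h σ F')
      = rcW G β p h F / ∑ F' ∈ G.edgeFinset.powerset, rcW G β p h F' := by
  simp only [sum_comm (γ := V → Bool), sum_esW]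

/-- Theorem (marginals of the ES measure), part (2): the edge-marginal of the
Edwards–Sokal measure is the random-cluster measure with external field. -/
theorem statement5 [Fintype V] [DecidableEq V]
    (G : SimpleGraph V) [DecidableRel G.Adj]
    (β : ℝ) (hβ : 0 < β)
    (J : Sym2 V → ℝ) (hJ : ∀ e ∈ G.edgeFinset, 0 ≤ J e)
    (h : V → ℝ)
    (p : Sym2 V → ℝ) (hp : ∀ e, p e = 1 - Real.exp (-(2 * β) * J e))
    (F : Finset (Sym2 V)) (hF : F ⊆ G.edgeFinset) :
    (∑ σ : V → Bool, esW G β p h σ F) /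
        (∑ σ : V → Bool, ∑ F' ∈ G.edgeFinset.powerset, esW G β p h σ F')
      = rcW G β p h F / ∑ F' ∈ G.edgeFinset.powerset, rcW G β p h F' :=
  statement5_general G β h p F

end
end

section
/- FKG auxiliary inequality (case III, free boundary): if (a_m)_{m=1}^q, (b_m)_{m=1}^q are positive sequences with b_m ≤ b_max for all m, h-indexing such that a_m, b_m ≤ their maxima, and the weights q_m > 0 satisfy Σ_{m ∈ Q} q_m ≥ 1 where Q = {m : a_m = a_max and b_m = b_max}, then (Σ_{m=1}^q q_m a_m)(Σ_{m'=1}^q q_{m'} b_{m'}) ≥ Σ_{m=1}^q q_m a_m b_m. -/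
open Finset

section WeightedSums

variable {ι R : Type*} [CommSemiring R] [PartialOrder R] [IsOrderedRing R]
  {s t : Finset ι} {w a b : ι → R}

theorem sum_mul_mul_le_mul_sum_of_le {i₀ : ι} (hmax : ∀ i ∈ s, a i ≤ a i₀)
    (hwb : ∀ i ∈ s, 0 ≤ w i * b i) :
    ∑ i ∈ s, w i * (a i * b i) ≤ a i₀ * ∑ i ∈ s, w i * b i := by
  rw [mul_sum]
  refine sum_le_sum fun i hi => ?_
  calc w i * (a i * b i) = a i * (w i * b i) := by ring
    _ ≤ a i₀ * (w i * b i) := mul_le_mul_of_nonneg_right (hmax i hi) (hwb i hi)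

theorem le_sum_mul_of_one_le_sum_of_forall_eq {c : R} (hts : t ⊆ s) (hc : ∀ i ∈ t, a i = c)
    (ht : 1 ≤ ∑ i ∈ t, w i) (hc₀ : 0 ≤ c) (hwa : ∀ i ∈ s, i ∉ t → 0 ≤ w i * a i) :
    c ≤ ∑ i ∈ s, w i * a i :=
  calc c ≤ (∑ i ∈ t, w i) * c := le_mul_of_one_le_left hc₀ ht
    _ = ∑ i ∈ t, w i * a i := by rw [sum_mul]; exact sum_congr rfl fun i hi => by rw [hc i hi]
    _ ≤ ∑ i ∈ s, w i * a i := sum_le_sum_of_subset_of_nonneg hts hwa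

end WeightedSums

open scoped Classical in
theorem statement15_general (q : ℕ)
    (a b w : Fin q → ℝ)
    (ha : ∀ m, 0 < a m) (hb : ∀ m, 0 < b m) (hw : ∀ m, 0 < w m)
    (hQ : 1 ≤ ∑ m ∈ Finset.univ.filter
        (fun m => (∀ k, a k ≤ a m) ∧ ∀ k, b k ≤ b m), w m) :
    ∑ m, w m * (a m * b m) ≤ (∑ m, w m * a m) * ∑ m, w m * b m := by
  set Q := univ.filter fun m => (∀ k, a k ≤ a m) ∧ ∀ k, b k ≤ b m
  obtain ⟨m₀, hm₀⟩ : Q.Nonempty := nonempty_of_sum_ne_zero (f := w) (by linarith)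
  have hmax : ∀ k, a k ≤ a m₀ := (mem_filter.mp hm₀).2.1
  have hwb : ∀ m ∈ univ, 0 ≤ w m * b m := fun m _ => (mul_pos (hw m) (hb m)).le
  have ha_top : a m₀ ≤ ∑ m, w m * a m :=
    le_sum_mul_of_one_le_sum_of_forall_eq (subset_univ Q)
      (fun m hm => le_antisymm (hmax m) ((mem_filter.mp hm).2.1 m₀)) hQ (ha m₀).le
      fun m _ _ => (mul_pos (hw m) (ha m)).le
  calc ∑ m, w m * (a m * b m) ≤ a m₀ * ∑ m, w m * b m :=
        sum_mul_mul_le_mul_sum_of_le (fun k _ => hmax k) hwb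
    _ ≤ (∑ m, w m * a m) * ∑ m, w m * b m :=
        mul_le_mul_of_nonneg_right ha_top (sum_nonneg hwb)

open scoped Classical in
/-- FKG auxiliary inequality (case III, free boundary): if the total weight of
the indices where both `a` and `b` attain their maxima is at least `1`, then
`(Σ_m q_m a_m)(Σ_m q_m b_m) ≥ Σ_m q_m a_m b_m`. -/
theorem statement15 (q : ℕ) (hq : 0 < q)
    (a b w : Fin q → ℝ)
    (ha : ∀ m, 0 < a m) (hb : ∀ m, 0 < b m) (hw : ∀ m, 0 < w m)
    (hQ : 1 ≤ ∑ m ∈ Finset.univ.filter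
        (fun m => (∀ k, a k ≤ a m) ∧ ∀ k, b k ≤ b m), w m) :
    ∑ m, w m * (a m * b m) ≤ (∑ m, w m * a m) * ∑ m, w m * b m :=
  statement15_general q a b w ha hb hw hQ
end
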